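/- arXiv:2407.21226 — 4 statements merged into one kernel-verified Lean document; each statement's English description precedes it below -/
import Mathlib

section
/- The set of integer points (k_1, k_2, k_3, r_2, r_3) in Z^5 satisfying k_1, k_2, k_3 >= 0, k_1 >= r_2 >= 0, r_2 + k_2 >= r_3 >= 0, r_2 + k_2 - r_3 >= 2*k_2, and r_2 >= k_2 is exactly the set of nonnegative integer combinations of the vectors (1,0,0,0,0), (0,0,1,0,0), (1,0,0,1,0), (1,0,0,1,1), (1,1,0,1,0); moreover these five vectors form a Z-basis of Z^5 (the cone is unimodular). -/
/-- The five generators of the cone `C₁`, in coordinates `(k₁,k₂,k₃,r₂,r₃)`. -/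
def coneOneGen : Fin 5 → Fin 5 → ℤ :=
  ![![1,0,0,0,0], ![0,0,1,0,0], ![1,0,0,1,0], ![1,0,0,1,1], ![1,1,0,1,0]]

/-!
The integer matrix `G` whose rows are the five generators has an integer inverse `H`, so
`x ↦ x ᵥ* H` is an automorphism of `ℤ⁵` sending each generator to a standard basis vector:
the generators form a `ℤ`-basis, and `x` is a nonnegative integer combination of them exactly
when its coefficient vector `x ᵥ* H = (k₁ - r₂, k₃, r₂ - k₂ - r₃, r₃, k₂)` is nonnegative.
These five inequalities are an irredundant form of the nine defining inequalities of `C₁`.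
-/

open Matrix

theorem exists_basis_eq_row_of_mul_eq_one {n R : Type*} [Fintype n] [DecidableEq n] [CommRing R]
    {G H : Matrix n n R} (hGH : G * H = 1) (hHG : H * G = 1) :
    ∃ b : Module.Basis n R (n → R), ∀ i, b i = G i := by
  let e : (n → R) ≃ₗ[R] (n → R) := .ofLinearMap H.vecMulLinear G.vecMulLinear
    (LinearMap.ext fun c => by simp [hGH]) (LinearMap.ext fun x => by simp [hHG])
  refine ⟨.ofEquivFun e, fun i => ?_⟩
  rw [Module.Basis.coe_ofEquivFun]
  exact single_one_vecMul i G

theorem exists_nat_comb_iff_nonneg_vecMul {n : Type*} [Fintype n] [DecidableEq n]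
    {G H : Matrix n n ℤ} (hGH : G * H = 1) (hHG : H * G = 1) (x : n → ℤ) :
    (∃ c : n → ℕ, x = ∑ i, (c i : ℤ) • G i) ↔ ∀ j, 0 ≤ (x ᵥ* H) j := by
  simp_rw [← vecMul_eq_sum]
  constructor
  · rintro ⟨c, rfl⟩ j
    simp [hGH]
  · intro hx
    refine ⟨fun j => ((x ᵥ* H) j).toNat, ?_⟩
    have hcoeff : (fun j => (((x ᵥ* H) j).toNat : ℤ)) = x ᵥ* H :=
      funext fun j => Int.toNat_of_nonneg (hx j)
    rw [hcoeff, vecMul_vecMul, hHG, vecMul_one]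

def coneOneCoord : Matrix (Fin 5) (Fin 5) ℤ :=
  !![1, 0, 0, 0, 0; 0, 0, -1, 0, 1; 0, 1, 0, 0, 0; -1, 0, 1, 0, 0; 0, 0, -1, 1, 0]

theorem coneOneGen_mul_coneOneCoord : Matrix.of coneOneGen * coneOneCoord = 1 := by
  decide

theorem coneOneCoord_mul_coneOneGen : coneOneCoord * Matrix.of coneOneGen = 1 := by
  decide

theorem vecMul_coneOneCoord (x : Fin 5 → ℤ) :
    x ᵥ* coneOneCoord = ![x 0 - x 3, x 2, x 3 - x 1 - x 4, x 4, x 1] := by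
  ext j
  fin_cases j <;> simp [coneOneCoord, vecMul, dotProduct, Fin.sum_univ_five] <;> ring

theorem coneOne_ineqs_iff_nonneg_vecMul_coneOneCoord (x : Fin 5 → ℤ) :
    (0 ≤ x 0 ∧ 0 ≤ x 1 ∧ 0 ≤ x 2 ∧ 0 ≤ x 3 ∧ x 3 ≤ x 0 ∧
        0 ≤ x 4 ∧ x 4 ≤ x 3 + x 1 ∧ 2 * x 1 ≤ x 3 + x 1 - x 4 ∧ x 1 ≤ x 3) ↔
      ∀ j, 0 ≤ (x ᵥ* coneOneCoord) j := by
  simp only [Fin.isValue, vecMul_coneOneCoord, Nat.succ_eq_add_one, Nat.reduceAdd,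
    Fin.forall_fin_succ, cons_val_zero, Int.sub_nonneg, cons_val_succ, cons_val_fin_one,
    forall_const]
  omega

/-- The integer points `(k₁,k₂,k₃,r₂,r₃) ∈ ℤ⁵` satisfying `k₁,k₂,k₃ ≥ 0`,
`k₁ ≥ r₂ ≥ 0`, `r₂ + k₂ ≥ r₃ ≥ 0`, `r₂ + k₂ - r₃ ≥ 2k₂` and `r₂ ≥ k₂` are exactly
the nonnegative integer combinations of the five listed vectors; moreover these
five vectors form a `ℤ`-basis of `ℤ⁵` (the cone is unimodular). -/
theorem coneOne_points_and_unimodular :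
    (∀ x : Fin 5 → ℤ,
        (0 ≤ x 0 ∧ 0 ≤ x 1 ∧ 0 ≤ x 2 ∧ 0 ≤ x 3 ∧ x 3 ≤ x 0 ∧
          0 ≤ x 4 ∧ x 4 ≤ x 3 + x 1 ∧ 2 * x 1 ≤ x 3 + x 1 - x 4 ∧ x 1 ≤ x 3) ↔
        ∃ c : Fin 5 → ℕ, x = ∑ i, (c i : ℤ) • coneOneGen i) ∧
    ∃ b : Module.Basis (Fin 5) ℤ (Fin 5 → ℤ), ∀ i, b i = coneOneGen i :=
  ⟨fun x => (coneOne_ineqs_iff_nonneg_vecMul_coneOneCoord x).trans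
      (exists_nat_comb_iff_nonneg_vecMul coneOneGen_mul_coneOneCoord
        coneOneCoord_mul_coneOneGen x).symm,
    exists_basis_eq_row_of_mul_eq_one coneOneGen_mul_coneOneCoord coneOneCoord_mul_coneOneGen⟩
end

section
/- The fundamental parallelepiped of the half-open simplicial cone C_3 generated by v_1=(1,0,0,0,0), v_2=(0,0,1,0,0), v_3=(1,1,0,1,0), v_4=(1,0,0,1,1), v_5=(0,1,0,0,1), with coefficients in [0,1) for v_1,v_2,v_3 and in (0,1] for v_4,v_5, contains exactly two integer points: (1,1,0,1,2) and (1,1,0,1,1). -/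
/-- The generators `v₁,…,v₅` of the half-open simplicial cone `C₃`. -/
def coneThreeGen : Fin 5 → Fin 5 → ℝ :=
  ![![1,0,0,0,0], ![0,0,1,0,0], ![1,1,0,1,0], ![1,0,0,1,1], ![0,1,0,0,1]]

/-- The fundamental parallelepiped
`Π(C₃) = {a₁v₁ + ⋯ + a₅v₅ : 0 ≤ a₁,a₂,a₃ < 1, 0 < a₄,a₅ ≤ 1}`
contains exactly two integer points: `(1,1,0,1,2)` and `(1,1,0,1,1)`. -/
theorem coneThree_parallelepiped_integer_points :
    {x : Fin 5 → ℤ | ∃ a : Fin 5 → ℝ,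
        (0 ≤ a 0 ∧ a 0 < 1) ∧ (0 ≤ a 1 ∧ a 1 < 1) ∧ (0 ≤ a 2 ∧ a 2 < 1) ∧
        (0 < a 3 ∧ a 3 ≤ 1) ∧ (0 < a 4 ∧ a 4 ≤ 1) ∧
        (fun j => (x j : ℝ)) = ∑ i, a i • coneThreeGen i} =
      {![1,1,0,1,2], ![1,1,0,1,1]} := by
  ext x
  simp only [Set.mem_setOf_eq, Set.mem_insert_iff, Set.mem_singleton_iff]
  constructor
  · rintro ⟨a, ⟨h00, h01⟩, ⟨h10, h11⟩, ⟨h20, h21⟩, ⟨h30, h31⟩, ⟨h40, h41⟩, heq⟩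
    have e0 := congr_fun heq 0
    have e1 := congr_fun heq 1
    have e2 := congr_fun heq 2
    have e3 := congr_fun heq 3
    have e4 := congr_fun heq 4
    simp [coneThreeGen, Fin.sum_univ_five, Matrix.vecHead, Matrix.vecTail] at e0 e1 e2 e3 e4
    -- x2 = a1 ∈ [0,1) ⇒ x2 = 0
    have hx2 : x 2 = 0 := by
      have l1 : (0:ℝ) ≤ (x 2 : ℝ) := by rw [e2]; linarith
      have l2 : ((x 2 : ℝ)) < 1 := by rw [e2]; linarith
      have l1' : 0 ≤ x 2 := by exact_mod_cast l1
      have l2' : x 2 < 1 := by exact_mod_cast l2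
      omega
    -- x1 = a2 + a4 ∈ (0,2) ⇒ x1 = 1
    have hx1 : x 1 = 1 := by
      have l1 : (0:ℝ) < (x 1 : ℝ) := by rw [e1]; linarith
      have l2 : ((x 1 : ℝ)) < 2 := by rw [e1]; linarith
      have l1' : 0 < x 1 := by exact_mod_cast l1
      have l2' : x 1 < 2 := by exact_mod_cast l2
      omega
    -- x3 = a2 + a3 ∈ (0,2) ⇒ x3 = 1
    have hx3 : x 3 = 1 := by
      have l1 : (0:ℝ) < (x 3 : ℝ) := by rw [e3]; linarith
      have l2 : ((x 3 : ℝ)) < 2 := by rw [e3]; linarith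
      have l1' : 0 < x 3 := by exact_mod_cast l1
      have l2' : x 3 < 2 := by exact_mod_cast l2
      omega
    -- a2 + a3 = 1 since x3 = 1
    have ha23 : a 2 + a 3 = 1 := by
      have := e3; rw [hx3] at this; push_cast at this; linarith
    -- x0 = a0 + a2 + a3 = a0 + 1 ∈ [1,2) ⇒ x0 = 1
    have hx0 : x 0 = 1 := by
      have l1 : (1:ℝ) ≤ (x 0 : ℝ) := by rw [e0]; linarith
      have l2 : ((x 0 : ℝ)) < 2 := by rw [e0]; linarith
      have l1' : 1 ≤ x 0 := by exact_mod_cast l1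
      have l2' : x 0 < 2 := by exact_mod_cast l2
      omega
    -- x4 = a3 + a4 ∈ (0,2] ⇒ x4 = 1 or 2
    have hx4 : x 4 = 1 ∨ x 4 = 2 := by
      have l1 : (0:ℝ) < (x 4 : ℝ) := by rw [e4]; linarith
      have l2 : ((x 4 : ℝ)) ≤ 2 := by rw [e4]; linarith
      have l1' : 0 < x 4 := by exact_mod_cast l1
      have l2' : x 4 ≤ 2 := by exact_mod_cast l2
      omega
    rcases hx4 with h | h
    · right
      funext j
      fin_cases j <;> simp [hx0, hx1, hx2, hx3, h]
    · left
      funext j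
      fin_cases j <;> simp [hx0, hx1, hx2, hx3, h]
  · rintro (h | h) <;> subst h
    · refine ⟨![0, 0, 0, 1, 1], by norm_num, by norm_num, by norm_num [Matrix.cons_val_four, Matrix.cons_val_three, Matrix.cons_val_two], by norm_num [Matrix.cons_val_four, Matrix.cons_val_three, Matrix.cons_val_two],
        by norm_num [Matrix.cons_val_four, Matrix.cons_val_three, Matrix.cons_val_two], ?_⟩
      funext j
      fin_cases j <;> norm_num [coneThreeGen, Fin.sum_univ_five, Matrix.vecHead, Matrix.vecTail, Matrix.cons_val_four, Matrix.cons_val_three, Matrix.cons_val_two]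
    · refine ⟨![0, 0, 1/2, 1/2, 1/2], by norm_num, by norm_num, by norm_num [Matrix.cons_val_four, Matrix.cons_val_three, Matrix.cons_val_two], by norm_num [Matrix.cons_val_four, Matrix.cons_val_three, Matrix.cons_val_two],
        by norm_num [Matrix.cons_val_four, Matrix.cons_val_three, Matrix.cons_val_two], ?_⟩
      funext j
      fin_cases j <;> norm_num [coneThreeGen, Fin.sum_univ_five, Matrix.vecHead, Matrix.vecTail, Matrix.cons_val_four, Matrix.cons_val_three, Matrix.cons_val_two]
end

section
/- The integer points of the half-open cone C_3 (generated by v_1=(1,0,0,0,0), v_2=(0,0,1,0,0), v_3=(1,1,0,1,0) with nonnegative real coefficients and v_4=(1,0,0,1,1), v_5=(0,1,0,0,1) with positive real coefficients) decompose as the disjoint union of { a_1 v_1 + a_2 v_2 + a_3 v_3 + a_4 v_4 + a_5 v_5 : a_1,a_2,a_3 in Z_{>=0}, a_4,a_5 in Z_{>0} } and { (1,1,0,1,1) + a_1 v_1 + a_2 v_2 + a_3 v_3 + a_4 v_4 + a_5 v_5 : all a_i in Z_{>=0} }. -/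
/-- The generators `v₁,…,v₅` of the half-open cone `C₃`, over `ℝ`. -/
def coneThreeGenR : Fin 5 → Fin 5 → ℝ :=
  ![![1,0,0,0,0], ![0,0,1,0,0], ![1,1,0,1,0], ![1,0,0,1,1], ![0,1,0,0,1]]

/-- The generators `v₁,…,v₅` of the half-open cone `C₃`, over `ℤ`. -/
def coneThreeGenZ : Fin 5 → Fin 5 → ℤ :=
  ![![1,0,0,0,0], ![0,0,1,0,0], ![1,1,0,1,0], ![1,0,0,1,1], ![0,1,0,0,1]]

/-- The integer points of the half-open cone `C₃` (coefficients of `v₁,v₂,v₃`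
nonnegative and of `v₄,v₅` strictly positive). -/
def coneThreeIntPoints : Set (Fin 5 → ℤ) :=
  {x | ∃ a : Fin 5 → ℝ, 0 ≤ a 0 ∧ 0 ≤ a 1 ∧ 0 ≤ a 2 ∧ 0 < a 3 ∧ 0 < a 4 ∧
    (fun j => (x j : ℝ)) = ∑ i, a i • coneThreeGenR i}

/-- The set `A = {a₁v₁ + ⋯ + a₅v₅ : a₁,a₂,a₃ ∈ ℤ≥0, a₄,a₅ ∈ ℤ>0}`. -/
def coneThreeSetA : Set (Fin 5 → ℤ) :=
  {x | ∃ c : Fin 5 → ℕ, 0 < c 3 ∧ 0 < c 4 ∧ x = ∑ i, (c i : ℤ) • coneThreeGenZ i}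

/-- The set `B = {(1,1,0,1,1) + a₁v₁ + ⋯ + a₅v₅ : all aᵢ ∈ ℤ≥0}`. -/
def coneThreeSetB : Set (Fin 5 → ℤ) :=
  {x | ∃ c : Fin 5 → ℕ, x = ![1,1,0,1,1] + ∑ i, (c i : ℤ) • coneThreeGenZ i}

/-- Coordinates of an integer combination of the generators. -/
lemma coneThreeSumZ (c : Fin 5 → ℕ) (j : Fin 5) :
    (∑ i, (c i : ℤ) • coneThreeGenZ i) j =
      ![(c 0 : ℤ) + c 2 + c 3, (c 2 : ℤ) + c 4, (c 1 : ℤ), (c 2 : ℤ) + c 3,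
        (c 3 : ℤ) + c 4] j := by
  fin_cases j <;>
    simp [coneThreeGenZ, Fin.sum_univ_five, Matrix.vecHead, Matrix.vecTail]

/-- The integer points of `C₃` decompose as the disjoint union of `A` and `B`. -/
theorem coneThree_integer_points_decomposition :
    coneThreeIntPoints = coneThreeSetA ∪ coneThreeSetB ∧
      Disjoint coneThreeSetA coneThreeSetB := by
  constructor
  · ext x
    constructor
    · rintro ⟨a, h0, h1, h2, h3, h4, heq⟩
      have e0 := congrFun heq 0
      have e1 := congrFun heq 1
      have e2 := congrFun heq 2
      have e3 := congrFun heq 3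
      have e4 := congrFun heq 4
      simp [coneThreeGenR, Fin.sum_univ_five, Matrix.vecHead, Matrix.vecTail]
        at e0 e1 e2 e3 e4
      -- derive integer inequalities
      have hb0 : 0 ≤ x 0 - x 3 := by
        have : (0:ℝ) ≤ ((x 0 - x 3 : ℤ) : ℝ) := by push_cast; linarith
        exact_mod_cast this
      have hb1 : 0 ≤ x 2 := by
        have : (0:ℝ) ≤ ((x 2 : ℤ) : ℝ) := by push_cast; linarith
        exact_mod_cast this
      have hn : 0 ≤ x 1 + x 3 - x 4 := by
        have : (0:ℝ) ≤ ((x 1 + x 3 - x 4 : ℤ) : ℝ) := by push_cast; linarith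
        exact_mod_cast this
      have hm : 0 < x 3 - x 1 + x 4 := by
        have : (0:ℝ) < ((x 3 - x 1 + x 4 : ℤ) : ℝ) := by push_cast; linarith
        exact_mod_cast this
      have hk : 0 < x 1 - x 3 + x 4 := by
        have : (0:ℝ) < ((x 1 - x 3 + x 4 : ℤ) : ℝ) := by push_cast; linarith
        exact_mod_cast this
      by_cases hpar : (x 1 + x 3 - x 4) % 2 = 0
      · left
        refine ⟨![(x 0 - x 3).toNat, (x 2).toNat, ((x 1 + x 3 - x 4)/2).toNat,
            ((x 3 - x 1 + x 4)/2).toNat, ((x 1 - x 3 + x 4)/2).toNat], ?_, ?_, ?_⟩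
        · simp only [Matrix.cons_val_three]
          simp [Matrix.vecHead, Matrix.vecTail]; omega
        · simp only [Matrix.cons_val_four]
          simp [Matrix.vecHead, Matrix.vecTail]; omega
        · funext j
          rw [coneThreeSumZ]
          fin_cases j <;> simp [Matrix.vecHead, Matrix.vecTail] <;> omega
      · right
        refine ⟨![(x 0 - x 3).toNat, (x 2).toNat, ((x 1 + x 3 - x 4 - 1)/2).toNat,
            ((x 3 - x 1 + x 4 - 1)/2).toNat, ((x 1 - x 3 + x 4 - 1)/2).toNat], ?_⟩
        funext j
        have := coneThreeSumZ ![(x 0 - x 3).toNat, (x 2).toNat,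
          ((x 1 + x 3 - x 4 - 1)/2).toNat, ((x 3 - x 1 + x 4 - 1)/2).toNat,
          ((x 1 - x 3 + x 4 - 1)/2).toNat] j
        fin_cases j <;>
          simp only [Pi.add_apply, this] <;>
          simp [Matrix.vecHead, Matrix.vecTail] <;> omega
    · rintro (⟨c, hc3, hc4, rfl⟩ | ⟨c, rfl⟩)
      · refine ⟨fun i => (c i : ℝ), by positivity, by positivity, by positivity,
          by show (0:ℝ) < (c 3 : ℝ); exact_mod_cast hc3,
          by show (0:ℝ) < (c 4 : ℝ); exact_mod_cast hc4, ?_⟩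
        funext j
        rw [coneThreeSumZ]
        fin_cases j <;>
          simp [coneThreeGenR, Fin.sum_univ_five, Matrix.vecHead, Matrix.vecTail] <;>
          push_cast <;> ring
      · refine ⟨![(c 0 : ℝ), (c 1 : ℝ), (c 2 : ℝ) + 1/2, (c 3 : ℝ) + 1/2,
          (c 4 : ℝ) + 1/2], ?_, ?_, ?_, ?_, ?_, ?_⟩
        rotate_left 5
        pick_goal 2
        · simp [Matrix.vecHead, Matrix.vecTail]
        pick_goal 2
        · simp [Matrix.vecHead, Matrix.vecTail]
        pick_goal 2
        · simp [Matrix.vecHead, Matrix.vecTail]; positivity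
        pick_goal 2
        · simp [Matrix.vecHead, Matrix.vecTail]; positivity
        pick_goal 2
        · simp [Matrix.vecHead, Matrix.vecTail]; positivity
        funext j
        have := coneThreeSumZ c j
        fin_cases j <;>
          simp only [Pi.add_apply, this] <;>
          simp [coneThreeGenR, Fin.sum_univ_five, Matrix.vecHead, Matrix.vecTail] <;>
          push_cast <;> ring
  · rw [Set.disjoint_left]
    rintro x ⟨c, _, _, rfl⟩ ⟨d, hd⟩
    have h1 := congrFun hd 1
    have h3 := congrFun hd 3
    have h4 := congrFun hd 4
    simp only [coneThreeSumZ, Pi.add_apply] at h1 h3 h4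
    simp [Matrix.vecHead, Matrix.vecTail] at h1 h3 h4
    omega
end

section
/- For all positive integers k_1, k_2, k_3, the refined q,t-Catalan number C_{(k_1,k_2,k_3)}(q,t) is symmetric in q and t: C_{(k_1,k_2,k_3)}(q,t) = C_{(k_1,k_2,k_3)}(t,q). -/
/-- The Xin–Zhang bounce statistic of the `(k₁,k₂,k₃)`-Dyck path with red ranks
`(0, r₂, r₃)`:  `2(k₁-r₂) + r₂ + k₂ - r₃ - min(r₂,k₂)` if
`r₂ + k₂ - r₃ ≥ 2 min(r₂,k₂)`, and `2(k₁-r₂) + ⌈(r₂+k₂-r₃)/2⌉` otherwise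
(it does not involve `k₃`). -/
def bounceThree (k₁ k₂ r₂ r₃ : ℕ) : ℕ :=
  if r₃ + 2 * min r₂ k₂ ≤ r₂ + k₂ then
    2 * (k₁ - r₂) + (r₂ + k₂ - r₃ - min r₂ k₂)
  else
    2 * (k₁ - r₂) + (r₂ + k₂ - r₃ + 1) / 2

open MvPolynomial in
/-- The refined q,t-Catalan number `C_{(k₁,k₂,k₃)}(q,t)`: the sum over pairs
`(r₂,r₃)` with `0 ≤ r₂ ≤ k₁` and `0 ≤ r₃ ≤ r₂ + k₂` of `q^{r₂+r₃} t^{bounce}`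
(here `q = X 0`, `t = X 1`). -/
noncomputable def Cthree (k₁ k₂ k₃ : ℕ) : MvPolynomial (Fin 2) ℤ :=
  ∑ r₂ ∈ Finset.range (k₁ + 1), ∑ r₃ ∈ Finset.range (r₂ + k₂ + 1),
    X 0 ^ (r₂ + r₃) * X 1 ^ bounceThree k₁ k₂ r₂ r₃

/-!
Write `a = r₂ + r₃` for the area and `b` for the bounce of a pair, and let `F(a)`
(`bounceThreshold`) be `k₂` for `a ≤ k₂` and `⌈(a + k₂)/2⌉` otherwise. Case analysis on the definition gives
`a + b = 2k₁ + (F(a) - r₂)⁺`, so the bounce only depends on the area and on `r₂ - F(a)`, and it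
does so symmetrically. The map `(r₂, r₃) ↦ (s, b - s)` with `s - F(b) = r₂ - F(a)` therefore keeps
`r₂ - F(·)`, exchanges area and bounce, and is an involution of the set of admissible pairs;
summing over its orbits gives the symmetry.
-/

namespace MvPolynomial

theorem rename_swap_sum_X_pow_mul_X_pow_of_involution {R ι : Type*} [CommSemiring R]
    (s : Finset ι) (f g : ι → ℕ) (σ : ι → ι) (hσ : ∀ i ∈ s, σ i ∈ s)
    (hσσ : ∀ i ∈ s, σ (σ i) = i) (hfg : ∀ i ∈ s, f (σ i) = g i) :
    rename (Equiv.swap (0 : Fin 2) 1) (∑ i ∈ s, X 0 ^ f i * X 1 ^ g i : MvPolynomial (Fin 2) R) =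
      ∑ i ∈ s, X 0 ^ f i * X 1 ^ g i := by
  simp only [map_sum, map_mul, map_pow, rename_X, Equiv.swap_apply_left,
    Equiv.swap_apply_right]
  refine Finset.sum_nbij' σ σ hσ hσ hσσ hσσ fun i hi => ?_
  have hgf : g (σ i) = f i := by rw [← hfg _ (hσ i hi), hσσ i hi]
  rw [hfg i hi, hgf, mul_comm]

end MvPolynomial

namespace Cthree

open Finset

def dyckPairs (k₁ k₂ : ℕ) : Finset (ℕ × ℕ) :=
  (range (k₁ + 1) ×ˢ range (k₁ + k₂ + 1)).filter fun p => p.2 ≤ p.1 + k₂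

theorem mem_dyckPairs {k₁ k₂ : ℕ} {p : ℕ × ℕ} :
    p ∈ dyckPairs k₁ k₂ ↔ p.1 ≤ k₁ ∧ p.2 ≤ p.1 + k₂ := by
  simp only [dyckPairs, mem_filter, mem_product, mem_range]
  omega

def bounceThreshold (k₂ a : ℕ) : ℕ := if a ≤ k₂ then k₂ else (a + k₂ + 1) / 2

theorem bounceThree_add_area {k₁ k₂ r₂ r₃ : ℕ} (h₂ : r₂ ≤ k₁) (h₃ : r₃ ≤ r₂ + k₂) :
    bounceThree k₁ k₂ r₂ r₃ + (r₂ + r₃) = 2 * k₁ + (bounceThreshold k₂ (r₂ + r₃) - r₂) := by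
  unfold bounceThree bounceThreshold
  split_ifs <;> omega

variable (k₁ k₂ : ℕ)

def areaBounceSwap (p : ℕ × ℕ) : ℕ × ℕ :=
  let b := bounceThree k₁ k₂ p.1 p.2
  let s := p.1 + bounceThreshold k₂ b - bounceThreshold k₂ (p.1 + p.2)
  (s, b - s)

variable {k₁ k₂}

/-- The first conjunct says that the truncated subtraction in `areaBounceSwap` is exact. -/
theorem areaBounceSwap_spec {p : ℕ × ℕ} (hp : p ∈ dyckPairs k₁ k₂) :
    bounceThreshold k₂ (p.1 + p.2) ≤ p.1 + bounceThreshold k₂ (bounceThree k₁ k₂ p.1 p.2) ∧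
      (areaBounceSwap k₁ k₂ p).1 ≤ bounceThree k₁ k₂ p.1 p.2 ∧
      areaBounceSwap k₁ k₂ p ∈ dyckPairs k₁ k₂ := by
  obtain ⟨r₂, r₃⟩ := p
  rw [mem_dyckPairs] at hp ⊢
  have hab := bounceThree_add_area hp.1 hp.2
  simp only [areaBounceSwap] at hab ⊢
  generalize bounceThree k₁ k₂ r₂ r₃ = b at hab ⊢
  simp only [bounceThreshold] at hab ⊢
  split_ifs at hab ⊢ <;> omega

theorem area_areaBounceSwap {p : ℕ × ℕ} (hp : p ∈ dyckPairs k₁ k₂) :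
    (areaBounceSwap k₁ k₂ p).1 + (areaBounceSwap k₁ k₂ p).2 = bounceThree k₁ k₂ p.1 p.2 :=
  Nat.add_sub_of_le (areaBounceSwap_spec hp).2.1

theorem bounceThree_areaBounceSwap {p : ℕ × ℕ} (hp : p ∈ dyckPairs k₁ k₂) :
    bounceThree k₁ k₂ (areaBounceSwap k₁ k₂ p).1 (areaBounceSwap k₁ k₂ p).2 = p.1 + p.2 := by
  obtain ⟨hthreshold, -, hmem⟩ := areaBounceSwap_spec hp
  rw [mem_dyckPairs] at hp hmem
  have hab := bounceThree_add_area hp.1 hp.2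
  have hab' := bounceThree_add_area hmem.1 hmem.2
  rw [area_areaBounceSwap (mem_dyckPairs.2 hp)] at hab'
  simp only [areaBounceSwap] at hab' ⊢
  omega

theorem areaBounceSwap_areaBounceSwap {p : ℕ × ℕ} (hp : p ∈ dyckPairs k₁ k₂) :
    areaBounceSwap k₁ k₂ (areaBounceSwap k₁ k₂ p) = p := by
  have hthreshold := (areaBounceSwap_spec hp).1
  have harea := area_areaBounceSwap hp
  have hbounce := bounceThree_areaBounceSwap hp
  generalize hq : areaBounceSwap k₁ k₂ p = q at harea hbounce
  simp only [areaBounceSwap, hbounce, harea]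
  obtain ⟨r₂, r₃⟩ := p
  simp only [areaBounceSwap, Prod.ext_iff] at hthreshold hq ⊢
  omega

end Cthree

theorem Cthree_eq_sum_dyckPairs (k₁ k₂ k₃ : ℕ) :
    Cthree k₁ k₂ k₃ = ∑ p ∈ Cthree.dyckPairs k₁ k₂,
      MvPolynomial.X 0 ^ (p.1 + p.2) * MvPolynomial.X 1 ^ bounceThree k₁ k₂ p.1 p.2 := by
  refine (Finset.sum_finset_product' _ _ _ fun p => ?_).symm
  simp only [Cthree.mem_dyckPairs, Finset.mem_range]
  omega

theorem Cthree_symm_general (k₁ k₂ k₃ : ℕ) :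
    MvPolynomial.rename (Equiv.swap (0 : Fin 2) 1) (Cthree k₁ k₂ k₃) =
      Cthree k₁ k₂ k₃ := by
  rw [Cthree_eq_sum_dyckPairs]
  exact MvPolynomial.rename_swap_sum_X_pow_mul_X_pow_of_involution _ _ _
    (Cthree.areaBounceSwap k₁ k₂) (fun _ hp => (Cthree.areaBounceSwap_spec hp).2.2)
    (fun _ => Cthree.areaBounceSwap_areaBounceSwap) (fun _ => Cthree.area_areaBounceSwap)

/-- For all positive integers `k₁,k₂,k₃`, the refined q,t-Catalan number
`C_{(k₁,k₂,k₃)}(q,t)` is symmetric in `q` and `t`. -/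
theorem Cthree_symm (k₁ k₂ k₃ : ℕ) (h₁ : 0 < k₁) (h₂ : 0 < k₂) (h₃ : 0 < k₃) :
    MvPolynomial.rename (Equiv.swap (0 : Fin 2) 1) (Cthree k₁ k₂ k₃) =
      Cthree k₁ k₂ k₃ :=
  Cthree_symm_general k₁ k₂ k₃
end
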